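/- arXiv:0904.1551 — 2 statements merged into one kernel-verified Lean document; each statement's English description precedes it below -/
import Mathlib

section
/- Let q ≥ 1 be an integer, γ ∈ (0,1), α > 0, c_1,…,c_q ≥ 1, and let (v_n)_{n≥1} be a nondecreasing sequence of reals with v_n ≥ 1. Suppose nonnegative reals a_{n,l} (n ≥ 1, 0 ≤ l ≤ q) satisfy: a_{n,0} ≤ α γ^n for all n ≥ 1; a_{1,l} = 0 for all 1 ≤ l ≤ q; and a_{n+1,l} ≤ γ a_{n,l} + c_l v_n^l Σ_{i=0}^{l−1} a_{n,i} for all n ≥ 1 and 1 ≤ l ≤ q. Then for all n ≥ 1 and 1 ≤ l ≤ q, a_{n+1,l} ≤ α γ^{max(n+1−l, 1)} · n c_l v_n^l · ∏_{i=1}^{l−1} (1 + n c_i v_n^i). -/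
/-!
Write `x n i = n c_i v_nⁱ` and `P n k = ∏_{i=1}^k (1 + x n i)`. The claim is proved by induction
on `n`, starting from the vacuous case `n = 0` (where `a_{1,l} = 0`). The telescoping identity
`P n k = 1 + ∑_{i<k} x n (i+1) · P n i` turns the induction hypothesis, together with
`a_{n+1,0} ≤ α γ^{n+1}`, into `∑_{i ≤ k} a_{n+1,i} ≤ α γ^{max(n+1-k,1)} P n k`. Feeding this into
the recursion for `l = k + 1`, the two contributions combine through
`x n l + c_l v_{n+1}^l ≤ x (n+1) l` and `P n k ≤ P (n+1) k`, both consequences of `v` being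
nondecreasing.
-/

open Finset

theorem prod_Icc_one_add_eq_one_add_sum {R : Type*} [CommRing R] (f : ℕ → R) (k : ℕ) :
    ∏ i ∈ Icc 1 k, (1 + f i) = 1 + ∑ i ∈ range k, f (i + 1) * ∏ j ∈ Icc 1 i, (1 + f j) := by
  induction k with
  | zero => simp
  | succ k ih =>
    rw [← insert_Icc_right_eq_Icc_add_one (by omega), prod_insert (by simp), sum_range_succ, ih]
    ring

theorem sum_range_succ_le_mul_prod_Icc_one_add {b x : ℕ → ℝ} {M : ℝ} {k : ℕ} (h0 : b 0 ≤ M)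
    (hb : ∀ i < k, b (i + 1) ≤ M * x (i + 1) * ∏ j ∈ Icc 1 i, (1 + x j)) :
    ∑ i ∈ range (k + 1), b i ≤ M * ∏ i ∈ Icc 1 k, (1 + x i) := by
  rw [prod_Icc_one_add_eq_one_add_sum, mul_add, mul_one, mul_sum, sum_range_succ', add_comm]
  refine add_le_add h0 (sum_le_sum fun i hi => (hb i (mem_range.1 hi)).trans_eq ?_)
  ring

section Recursion

variable {q : ℕ} {y : ℕ → ℕ → ℝ}

theorem natCast_mul_nonneg_of_nonneg (hy0 : ∀ n l, 1 ≤ n → 1 ≤ l → l ≤ q → 0 ≤ y n l)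
    (n : ℕ) {l : ℕ} (hl : 1 ≤ l) (hlq : l ≤ q) : 0 ≤ (n : ℝ) * y n l := by
  rcases Nat.eq_zero_or_pos n with rfl | hn
  · simp
  · exact mul_nonneg n.cast_nonneg (hy0 n l hn hl hlq)

theorem prod_Icc_one_add_natCast_mul_nonneg (hy0 : ∀ n l, 1 ≤ n → 1 ≤ l → l ≤ q → 0 ≤ y n l)
    (n : ℕ) {k : ℕ} (hkq : k ≤ q) : 0 ≤ ∏ i ∈ Icc 1 k, (1 + (n : ℝ) * y n i) :=
  prod_nonneg fun i hi => by
    rw [mem_Icc] at hi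
    linarith [natCast_mul_nonneg_of_nonneg hy0 n hi.1 (hi.2.trans hkq)]

theorem natCast_mul_add_le_of_monotone
    (hymono : ∀ n l, 1 ≤ n → 1 ≤ l → l ≤ q → y n l ≤ y (n + 1) l)
    (n : ℕ) {l : ℕ} (hl : 1 ≤ l) (hlq : l ≤ q) :
    (n : ℝ) * y n l + y (n + 1) l ≤ ((n : ℝ) + 1) * y (n + 1) l := by
  rcases Nat.eq_zero_or_pos n with rfl | hn
  · simp
  · nlinarith [mul_le_mul_of_nonneg_left (hymono n l hn hl hlq) n.cast_nonneg]

theorem prod_Icc_one_add_natCast_mul_le_succ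
    (hy0 : ∀ n l, 1 ≤ n → 1 ≤ l → l ≤ q → 0 ≤ y n l)
    (hymono : ∀ n l, 1 ≤ n → 1 ≤ l → l ≤ q → y n l ≤ y (n + 1) l) (n : ℕ) {k : ℕ}
    (hkq : k ≤ q) :
    ∏ i ∈ Icc 1 k, (1 + (n : ℝ) * y n i) ≤ ∏ i ∈ Icc 1 k, (1 + ((n : ℝ) + 1) * y (n + 1) i) := by
  refine prod_le_prod (fun i hi => ?_) (fun i hi => ?_) <;> rw [mem_Icc] at hi
  · linarith [natCast_mul_nonneg_of_nonneg hy0 n hi.1 (hi.2.trans hkq)]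
  · linarith [natCast_mul_add_le_of_monotone hymono n hi.1 (hi.2.trans hkq),
      hy0 (n + 1) i (by omega) hi.1 (hi.2.trans hkq)]

theorem sum_range_succ_le_of_bound (hy0 : ∀ n l, 1 ≤ n → 1 ≤ l → l ≤ q → 0 ≤ y n l)
    {γ α : ℝ} (hγ0 : 0 ≤ γ) (hγ1 : γ ≤ 1) (hα : 0 ≤ α) {a : ℕ → ℕ → ℝ} {n k : ℕ}
    (hkq : k ≤ q) (ha0 : a (n + 1) 0 ≤ α * γ ^ (n + 1))
    (ha : ∀ l, 1 ≤ l → l ≤ q → a (n + 1) l ≤ α * γ ^ max (n + 1 - l) 1 * ((n : ℝ) * y n l) *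
      ∏ i ∈ Icc 1 (l - 1), (1 + (n : ℝ) * y n i)) :
    ∑ i ∈ range (k + 1), a (n + 1) i ≤
      α * γ ^ max (n + 1 - k) 1 * ∏ i ∈ Icc 1 k, (1 + (n : ℝ) * y n i) := by
  have hγpow {m m' : ℕ} (h : m ≤ m') : α * γ ^ m' ≤ α * γ ^ m :=
    mul_le_mul_of_nonneg_left (pow_le_pow_of_le_one hγ0 hγ1 h) hα
  refine sum_range_succ_le_mul_prod_Icc_one_add (ha0.trans (hγpow (by omega)))
    fun i hi => (ha (i + 1) (by omega) (by omega)).trans ?_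
  simp only [Nat.add_sub_add_right, Nat.add_sub_cancel]
  refine mul_le_mul_of_nonneg_right (mul_le_mul_of_nonneg_right (hγpow ?_) ?_) ?_
  · omega
  · exact natCast_mul_nonneg_of_nonneg hy0 n (by omega) (by omega)
  · exact prod_Icc_one_add_natCast_mul_nonneg hy0 n (by omega)

theorem le_mul_prod_of_recursion (hy0 : ∀ n l, 1 ≤ n → 1 ≤ l → l ≤ q → 0 ≤ y n l)
    (hymono : ∀ n l, 1 ≤ n → 1 ≤ l → l ≤ q → y n l ≤ y (n + 1) l)
    {γ α : ℝ} (hγ0 : 0 ≤ γ) (hγ1 : γ ≤ 1) (hα : 0 ≤ α) {a : ℕ → ℕ → ℝ}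
    (hbase : ∀ n, 1 ≤ n → a n 0 ≤ α * γ ^ n)
    (hinit : ∀ l, 1 ≤ l → l ≤ q → a 1 l = 0)
    (hrec : ∀ n l, 1 ≤ n → 1 ≤ l → l ≤ q →
      a (n + 1) l ≤ γ * a n l + y n l * ∑ i ∈ range l, a n i) :
    ∀ n l, 1 ≤ l → l ≤ q →
      a (n + 1) l ≤ α * γ ^ max (n + 1 - l) 1 * ((n : ℝ) * y n l) *
        ∏ i ∈ Icc 1 (l - 1), (1 + (n : ℝ) * y n i) := by
  intro n
  induction n with
  | zero => intro l hl hlq; simp [hinit l hl hlq]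
  | succ n ih =>
    intro l hl hlq
    obtain ⟨k, rfl⟩ : ∃ k, l = k + 1 := ⟨l - 1, by omega⟩
    have hsum := sum_range_succ_le_of_bound hy0 hγ0 hγ1 hα (k := k) (by omega)
      (hbase _ le_add_self) ih
    have hprev := mul_le_mul_of_nonneg_left (ih (k + 1) hl hlq) hγ0
    simp only [Nat.add_sub_cancel, Nat.add_sub_add_right] at hprev ⊢
    push_cast
    set M := α * γ ^ max (n + 1 - k) 1
    set P := ∏ i ∈ Icc 1 k, (1 + (n : ℝ) * y n i)
    have hx := natCast_mul_nonneg_of_nonneg hy0 n hl hlq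
    have hP : 0 ≤ P := prod_Icc_one_add_natCast_mul_nonneg hy0 n (by omega)
    have hM : 0 ≤ M := by positivity
    have hγM : α * (γ * γ ^ max (n - k) 1) ≤ M := by
      rw [← pow_succ']
      exact mul_le_mul_of_nonneg_left (pow_le_pow_of_le_one hγ0 hγ1 (by omega)) hα
    replace hprev : γ * a (n + 1) (k + 1) ≤ M * ((n : ℝ) * y n (k + 1)) * P := by
      calc γ * a (n + 1) (k + 1)
          ≤ α * (γ * γ ^ max (n - k) 1) * ((n : ℝ) * y n (k + 1)) * P := hprev.trans_eq (by ring)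
        _ ≤ M * ((n : ℝ) * y n (k + 1)) * P := by gcongr
    have hyl := hy0 (n + 1) (k + 1) (by omega) hl hlq
    have hPP := prod_Icc_one_add_natCast_mul_le_succ hy0 hymono n (k := k) (by omega)
    calc a (n + 1 + 1) (k + 1)
        ≤ γ * a (n + 1) (k + 1) + y (n + 1) (k + 1) * ∑ i ∈ range (k + 1), a (n + 1) i :=
          hrec (n + 1) (k + 1) (by omega) hl hlq
      _ ≤ M * (P * ((n : ℝ) * y n (k + 1) + y (n + 1) (k + 1))) := by
          linarith [mul_le_mul_of_nonneg_left hsum hyl]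
      _ ≤ M * ((∏ i ∈ Icc 1 k, (1 + ((n : ℝ) + 1) * y (n + 1) i)) *
            (((n : ℝ) + 1) * y (n + 1) (k + 1))) := by
          refine mul_le_mul_of_nonneg_left (mul_le_mul hPP ?_ (by linarith) (hP.trans hPP)) hM
          exact natCast_mul_add_le_of_monotone hymono n hl hlq
      _ = _ := by ring

end Recursion

theorem stmt18_general (q : ℕ) (γ α : ℝ) (hγ : γ ∈ Set.Ioo (0 : ℝ) 1)
    (hα : 0 < α)
    (c : ℕ → ℝ) (hc : ∀ l, 1 ≤ l → l ≤ q → 1 ≤ c l)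
    (v : ℕ → ℝ) (hv1 : ∀ n, 1 ≤ n → 1 ≤ v n)
    (hvmono : ∀ m n, 1 ≤ m → m ≤ n → v m ≤ v n)
    (a : ℕ → ℕ → ℝ)
    (hbase : ∀ n, 1 ≤ n → a n 0 ≤ α * γ ^ n)
    (hinit : ∀ l, 1 ≤ l → l ≤ q → a 1 l = 0)
    (hrec : ∀ n l, 1 ≤ n → 1 ≤ l → l ≤ q →
      a (n + 1) l ≤ γ * a n l + c l * v n ^ l * ∑ i ∈ Finset.range l, a n i) :
    ∀ n l, 1 ≤ n → 1 ≤ l → l ≤ q →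
      a (n + 1) l ≤ α * γ ^ max (n + 1 - l) 1 * ((n : ℝ) * c l * v n ^ l) *
        ∏ i ∈ Finset.Icc 1 (l - 1), (1 + (n : ℝ) * c i * v n ^ i) := by
  have hv0 (n : ℕ) (hn : 1 ≤ n) : 0 ≤ v n := zero_le_one.trans (hv1 n hn)
  have hy0 (n l : ℕ) (hn : 1 ≤ n) (hl : 1 ≤ l) (hlq : l ≤ q) : 0 ≤ c l * v n ^ l :=
    mul_nonneg (zero_le_one.trans (hc l hl hlq)) (pow_nonneg (hv0 n hn) l)
  have hymono (n l : ℕ) (hn : 1 ≤ n) (hl : 1 ≤ l) (hlq : l ≤ q) :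
      c l * v n ^ l ≤ c l * v (n + 1) ^ l :=
    mul_le_mul_of_nonneg_left (pow_le_pow_left₀ (hv0 n hn) (hvmono n (n + 1) hn n.le_succ) l)
      (zero_le_one.trans (hc l hl hlq))
  intro n l _ hl hlq
  simpa only [mul_assoc] using
    le_mul_prod_of_recursion hy0 hymono hγ.1.le hγ.2.le hα.le hbase hinit hrec n l hl hlq

/-- Let `q ≥ 1`, `γ ∈ (0,1)`, `α > 0`, `c₁,…,c_q ≥ 1`, and
`(v_n)_{n ≥ 1}` nondecreasing with `v_n ≥ 1`.  Suppose nonnegative reals `a_{n,l}`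
satisfy `a_{n,0} ≤ α γⁿ`, `a_{1,l} = 0` for `1 ≤ l ≤ q`, and
`a_{n+1,l} ≤ γ a_{n,l} + c_l v_nˡ ∑_{i=0}^{l−1} a_{n,i}` for `n ≥ 1`, `1 ≤ l ≤ q`.
Then for all `n ≥ 1` and `1 ≤ l ≤ q`,
`a_{n+1,l} ≤ α γ^{max(n+1−l,1)} · n c_l v_nˡ · ∏_{i=1}^{l−1} (1 + n c_i v_nⁱ)`. -/
theorem stmt18 (q : ℕ) (hq : 1 ≤ q) (γ α : ℝ) (hγ : γ ∈ Set.Ioo (0 : ℝ) 1)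
    (hα : 0 < α)
    (c : ℕ → ℝ) (hc : ∀ l, 1 ≤ l → l ≤ q → 1 ≤ c l)
    (v : ℕ → ℝ) (hv1 : ∀ n, 1 ≤ n → 1 ≤ v n)
    (hvmono : ∀ m n, 1 ≤ m → m ≤ n → v m ≤ v n)
    (a : ℕ → ℕ → ℝ) (ha0 : ∀ n l, 1 ≤ n → l ≤ q → 0 ≤ a n l)
    (hbase : ∀ n, 1 ≤ n → a n 0 ≤ α * γ ^ n)
    (hinit : ∀ l, 1 ≤ l → l ≤ q → a 1 l = 0)
    (hrec : ∀ n l, 1 ≤ n → 1 ≤ l → l ≤ q →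
      a (n + 1) l ≤ γ * a n l + c l * v n ^ l * ∑ i ∈ Finset.range l, a n i) :
    ∀ n l, 1 ≤ n → 1 ≤ l → l ≤ q →
      a (n + 1) l ≤ α * γ ^ max (n + 1 - l) 1 * ((n : ℝ) * c l * v n ^ l) *
        ∏ i ∈ Finset.Icc 1 (l - 1), (1 + (n : ℝ) * c i * v n ^ i) :=
  stmt18_general q γ α hγ hα c hc v hv1 hvmono a hbase hinit hrec
end

section
/- Let σ = (σ_0,…,σ_n) be a time-homogeneous binary Markov chain as in the context, with one-step transition matrix Q having rows (1−p_{01}, p_{01}) and (p_{10}, 1−p_{10}) where p_{01}, p_{10} ∈ (0,1), and set r = 1 − p_{01} − p_{10}. For t = 1,…,n let ℓ_t : ℝ × {0,1} → ℝ be such that ε ↦ ℓ_t(ε,a) is differentiable for a = 0,1, with ℓ_t(0,1) = ℓ_t(0,0). Define d_t(ε) = ℓ_t(ε,1) − ℓ_t(ε,0), S_n(ε) = Σ_{t=1}^n ℓ_t(ε,σ_t), and λ_n(ε) = ln E[e^{S_n(ε)} | σ_0 = 1] − ln E[e^{S_n(ε)} | σ_0 = 0]. Then D_{0t} = r^t for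 every 1 ≤ t ≤ n, and λ_n'(0) = Σ_{t=1}^n r^t · d_t'(0). -/
/-!
Summing a path weight over its last coordinate only uses that the rows of `Q` sum to one, so by
induction on the length of the path the law of `σ_s` given `σ₀ = a` is the row `a` of `Qˢ`. For
two states, the difference of the two rows of `Qˢ` in column `1` gets multiplied by
`r = Q₁₁ - Q₀₁` at every step, whence `D_{0s} = rˢ`.

Since `ℓ_t(0, 1) = ℓ_t(0, 0)`, the exponent `S_n(0)` is the same on every path, so the derivative
at `0` of `log E[e^{S_n(ε)} | σ₀ = a]` is `E[S_n'(0) | σ₀ = a] = ∑_t ∑_b P_{0t}(a, b) ℓ_t'(0, b)`.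
Taking the difference for `a = 1` and `a = 0`, each term collapses to `D_{0t} d_t'(0)`.
-/

/-- The weight `π(v₀) ∏_{t=1}^n Q_t(v_{t−1}, v_t)` of a path `v` of a (possibly
time-inhomogeneous) binary Markov chain `σ₀, …, σ_n` with initial law `π` and one-step
transition matrices `Q_t`. -/
noncomputable def pathWeight (n : ℕ) (π : Fin 2 → ℝ) (Q : ℕ → Fin 2 → Fin 2 → ℝ)
    (v : Fin (n + 1) → Fin 2) : ℝ :=
  π (v 0) * ∏ t : Fin n, Q (t.1 + 1) (v t.castSucc) (v t.succ)

/-- The conditional expectation `E[F(σ) | σ_s = a]`, a finite weighted sum over paths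
with `σ_s = a`. -/
noncomputable def condExp' (n : ℕ) (π : Fin 2 → ℝ) (Q : ℕ → Fin 2 → Fin 2 → ℝ)
    (s : Fin (n + 1)) (a : Fin 2) (F : (Fin (n + 1) → Fin 2) → ℝ) : ℝ :=
  (∑ v : Fin (n + 1) → Fin 2, if v s = a then pathWeight n π Q v * F v else 0) /
    (∑ v : Fin (n + 1) → Fin 2, if v s = a then pathWeight n π Q v else 0)

/-- The conditional probability `P_{st}(a,b) = P(σ_t = b | σ_s = a)`. -/
noncomputable def condProb (n : ℕ) (π : Fin 2 → ℝ) (Q : ℕ → Fin 2 → Fin 2 → ℝ)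
    (s t : Fin (n + 1)) (a b : Fin 2) : ℝ :=
  condExp' n π Q s a fun v => if v t = b then 1 else 0

open Finset Matrix

lemma pathWeight_snoc (n : ℕ) (π : Fin 2 → ℝ) (Q : ℕ → Fin 2 → Fin 2 → ℝ)
    (u : Fin (n + 1) → Fin 2) (x : Fin 2) :
    pathWeight (n + 1) π Q (Fin.snoc u x) = pathWeight n π Q u * Q (n + 1) (u (Fin.last n)) x := by
  simp only [pathWeight, Fin.prod_univ_castSucc, ← mul_assoc]
  congr 2
  · exact prod_congr rfl fun t _ => by
      rw [Fin.succ_castSucc, Fin.snoc_castSucc, Fin.snoc_castSucc, Fin.val_castSucc]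
  · rw [Fin.snoc_castSucc]
  · rw [Fin.succ_last, Fin.snoc_last]

lemma sum_pathWeight_start_succ_mul (n : ℕ) (π : Fin 2 → ℝ) (Q : ℕ → Fin 2 → Fin 2 → ℝ)
    (a : Fin 2) (G : (Fin (n + 2) → Fin 2) → ℝ) :
    ∑ v : Fin (n + 2) → Fin 2, (if v 0 = a then pathWeight (n + 1) π Q v else 0) * G v =
      ∑ u : Fin (n + 1) → Fin 2, (if u 0 = a then pathWeight n π Q u else 0) *
        ∑ x, Q (n + 1) (u (Fin.last n)) x * G (Fin.snoc u x) := by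
  rw [← (Fin.snocEquiv fun _ => Fin 2).sum_comp, Fintype.sum_prod_type_right]
  refine sum_congr rfl fun u _ => ?_
  have h0 (x : Fin 2) : (Fin.snoc u x : Fin (n + 2) → Fin 2) 0 = u 0 :=
    Fin.snoc_castSucc (i := 0) ..
  simp only [show ∀ x, (Fin.snocEquiv fun _ => Fin 2) (x, u) = Fin.snoc u x from fun _ => rfl,
    h0, pathWeight_snoc, mul_sum]
  split_ifs <;> simp only [mul_assoc, zero_mul]

lemma sum_pathWeight_start_mul_apply (π : Fin 2 → ℝ) (Q : Fin 2 → Fin 2 → ℝ)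
    (hQ : ∀ i, ∑ j, Q i j = 1) (a : Fin 2) (f : Fin 2 → ℝ) :
    ∀ (n : ℕ) (s : Fin (n + 1)),
      ∑ v : Fin (n + 1) → Fin 2, (if v 0 = a then pathWeight n π (fun _ => Q) v else 0) * f (v s) =
        π a * ∑ b, (of Q ^ (s : ℕ)) a b * f b
  | 0, s => by
    rw [← (Equiv.funUnique (Fin 1) (Fin 2)).symm.sum_comp, Fin.fin_one_eq_zero s]
    simp [pathWeight, one_apply]
  | n + 1, s => by
    rw [sum_pathWeight_start_succ_mul]
    induction s using Fin.lastCases with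
    | last =>
      simp only [Fin.snoc_last]
      rw [sum_pathWeight_start_mul_apply π Q hQ a (fun c => ∑ x, Q c x * f x) n (Fin.last n)]
      simp only [Fin.val_last, pow_succ, mul_apply, of_apply, sum_mul, mul_sum, mul_assoc]
      exact sum_comm
    | cast s =>
      simp only [Fin.snoc_castSucc, ← sum_mul, hQ, one_mul, Fin.val_castSucc]
      exact sum_pathWeight_start_mul_apply π Q hQ a f n s

lemma sum_pathWeight_start (π : Fin 2 → ℝ) (Q : Fin 2 → Fin 2 → ℝ)
    (hQ : ∀ i, ∑ j, Q i j = 1) (a : Fin 2) (n : ℕ) :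
    ∑ v : Fin (n + 1) → Fin 2, (if v 0 = a then pathWeight n π (fun _ => Q) v else 0) = π a := by
  simpa [one_apply] using sum_pathWeight_start_mul_apply π Q hQ a 1 n 0

lemma condExp'_eq_sum_mul_div (n : ℕ) (π : Fin 2 → ℝ) (Q : ℕ → Fin 2 → Fin 2 → ℝ)
    (s : Fin (n + 1)) (a : Fin 2) (F : (Fin (n + 1) → Fin 2) → ℝ) :
    condExp' n π Q s a F =
      (∑ v, (if v s = a then pathWeight n π Q v else 0) * F v) /
        ∑ v, (if v s = a then pathWeight n π Q v else 0) := by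
  simp only [condExp', ite_mul, zero_mul]

lemma condExp'_sum {ι : Type*} (I : Finset ι) (n : ℕ) (π : Fin 2 → ℝ)
    (Q : ℕ → Fin 2 → Fin 2 → ℝ) (s : Fin (n + 1)) (a : Fin 2)
    (F : ι → (Fin (n + 1) → Fin 2) → ℝ) :
    condExp' n π Q s a (fun v => ∑ i ∈ I, F i v) = ∑ i ∈ I, condExp' n π Q s a (F i) := by
  simp only [condExp'_eq_sum_mul_div, mul_sum, ← sum_div]
  rw [sum_comm]

lemma condExp'_comp_apply (π : Fin 2 → ℝ) (Q : Fin 2 → Fin 2 → ℝ) (hQ : ∀ i, ∑ j, Q i j = 1)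
    {a : Fin 2} (ha : π a ≠ 0) (n : ℕ) (s : Fin (n + 1)) (f : Fin 2 → ℝ) :
    condExp' n π (fun _ => Q) 0 a (fun v => f (v s)) = ∑ b, (of Q ^ (s : ℕ)) a b * f b := by
  rw [condExp'_eq_sum_mul_div, sum_pathWeight_start_mul_apply π Q hQ,
    sum_pathWeight_start π Q hQ, mul_div_cancel_left₀ _ ha]

lemma condProb_eq_pow_apply (π : Fin 2 → ℝ) (Q : Fin 2 → Fin 2 → ℝ) (hQ : ∀ i, ∑ j, Q i j = 1)
    {a : Fin 2} (ha : π a ≠ 0) (n : ℕ) (s : Fin (n + 1)) (b : Fin 2) :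
    condProb n π (fun _ => Q) 0 s a b = (of Q ^ (s : ℕ)) a b := by
  simp [condProb, condExp'_comp_apply π Q hQ ha n s fun c => if c = b then 1 else 0]

lemma sum_pow_apply_eq_one (Q : Fin 2 → Fin 2 → ℝ) (hQ : ∀ i, ∑ j, Q i j = 1) :
    ∀ (k : ℕ) (i : Fin 2), ∑ j, (of Q ^ k) i j = 1
  | 0, i => by simp [one_apply]
  | k + 1, i => by
    simp only [pow_succ, mul_apply, of_apply]
    rw [sum_comm]
    simp only [← mul_sum, hQ, mul_one, sum_pow_apply_eq_one Q hQ k i]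

lemma sum_apply_one_mul_sub_sum_apply_zero_mul (P : Fin 2 → Fin 2 → ℝ)
    (hP : ∀ i, ∑ j, P i j = 1) (f : Fin 2 → ℝ) :
    ∑ b, P 1 b * f b - ∑ b, P 0 b * f b = (P 1 1 - P 0 1) * (f 1 - f 0) := by
  have h0 := hP 0
  have h1 := hP 1
  simp only [Fin.sum_univ_two] at *
  linear_combination (f 0) * (h1 - h0)

lemma pow_apply_one_one_sub_pow_apply_zero_one (Q : Fin 2 → Fin 2 → ℝ)
    (hQ : ∀ i, ∑ j, Q i j = 1) :
    ∀ k : ℕ, (of Q ^ k) 1 1 - (of Q ^ k) 0 1 = (Q 1 1 - Q 0 1) ^ k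
  | 0 => by simp [one_apply]
  | k + 1 => by
    simp only [pow_succ, mul_apply, of_apply]
    rw [sum_apply_one_mul_sub_sum_apply_zero_mul _ (sum_pow_apply_eq_one Q hQ k),
      pow_apply_one_one_sub_pow_apply_zero_one Q hQ k, mul_comm]

lemma hasDerivAt_log_sum_mul_exp_div {ι : Type*} [Fintype ι] (w : ι → ℝ) (hw : ∑ i, w i ≠ 0)
    {S : ℝ → ι → ℝ} {S' : ι → ℝ} {x C : ℝ} (hS : ∀ i, HasDerivAt (fun ε => S ε i) (S' i) x)
    (hC : ∀ i, S x i = C) :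
    HasDerivAt (fun ε => Real.log ((∑ i, w i * Real.exp (S ε i)) / ∑ i, w i))
      ((∑ i, w i * S' i) / ∑ i, w i) x := by
  have hN : HasDerivAt (fun ε => ∑ i, w i * Real.exp (S ε i))
      (∑ i, w i * (Real.exp (S x i) * S' i)) x :=
    HasDerivAt.fun_sum fun i _ => (hS i).exp.const_mul (w i)
  simp only [hC, mul_left_comm _ (Real.exp C), ← mul_sum] at hN
  have hNx : ∑ i, w i * Real.exp (S x i) = Real.exp C * ∑ i, w i := by
    simp only [hC, sum_mul, mul_comm]
  have hlog := (hN.div_const (∑ i, w i)).log (by simp [hNx, hw, Real.exp_ne_zero])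
  convert hlog using 1
  rw [hNx]
  field_simp [Real.exp_ne_zero]

lemma hasDerivAt_log_condExp'_exp_sum (π : Fin 2 → ℝ) (Q : Fin 2 → Fin 2 → ℝ)
    (hQ : ∀ i, ∑ j, Q i j = 1) {a : Fin 2} (ha : π a ≠ 0) (n : ℕ) (ℓ : ℕ → ℝ → Fin 2 → ℝ)
    (hdiff : ∀ (t : Fin n) b, DifferentiableAt ℝ (fun ε => ℓ (t.1 + 1) ε b) 0)
    (hℓ0 : ∀ (t : Fin n) b, ℓ (t.1 + 1) 0 b = ℓ (t.1 + 1) 0 0) :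
    HasDerivAt (fun ε => Real.log (condExp' n π (fun _ => Q) 0 a
        fun v => Real.exp (∑ t : Fin n, ℓ (t.1 + 1) ε (v t.succ))))
      (∑ t : Fin n, ∑ b, (of Q ^ (t.1 + 1)) a b * deriv (fun ε => ℓ (t.1 + 1) ε b) 0) 0 := by
  simp only [condExp'_eq_sum_mul_div]
  refine (hasDerivAt_log_sum_mul_exp_div _ (by rwa [sum_pathWeight_start π Q hQ])
    (fun (v : Fin (n + 1) → Fin 2) => HasDerivAt.fun_sum fun t _ => (hdiff t (v t.succ)).hasDerivAt)
    (fun v => sum_congr rfl fun t _ => hℓ0 t (v t.succ))).congr_deriv ?_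
  rw [← condExp'_eq_sum_mul_div, condExp'_sum]
  exact sum_congr rfl fun t _ =>
    condExp'_comp_apply π Q hQ ha n t.succ fun b => deriv (ℓ (t.1 + 1) · b) 0

theorem stmt19_general (n : ℕ) (p01 p10 : ℝ)
    (π : Fin 2 → ℝ) (hπ : ∀ a, 0 < π a)
    (ℓ : ℕ → ℝ → Fin 2 → ℝ)
    (hdiff : ∀ t ∈ Finset.Icc 1 n, ∀ a, Differentiable ℝ fun ε => ℓ t ε a)
    (h0 : ∀ t ∈ Finset.Icc 1 n, ℓ t 0 1 = ℓ t 0 0) :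
    (∀ t : Fin n,
      condProb n π (fun _ => ![![1 - p01, p01], ![p10, 1 - p10]]) 0 t.succ 1 1 -
          condProb n π (fun _ => ![![1 - p01, p01], ![p10, 1 - p10]]) 0 t.succ 0 1 =
        (1 - p01 - p10) ^ (t.1 + 1)) ∧
    HasDerivAt (fun ε =>
        Real.log (condExp' n π (fun _ => ![![1 - p01, p01], ![p10, 1 - p10]]) 0 1
          fun v => Real.exp (∑ t : Fin n, ℓ (t.1 + 1) ε (v t.succ))) -
        Real.log (condExp' n π (fun _ => ![![1 - p01, p01], ![p10, 1 - p10]]) 0 0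
          fun v => Real.exp (∑ t : Fin n, ℓ (t.1 + 1) ε (v t.succ))))
      (∑ t : Fin n, (1 - p01 - p10) ^ (t.1 + 1) *
        deriv (fun ε => ℓ (t.1 + 1) ε 1 - ℓ (t.1 + 1) ε 0) 0) 0 := by
  set Q : Fin 2 → Fin 2 → ℝ := ![![1 - p01, p01], ![p10, 1 - p10]]
  have hQ : ∀ i, ∑ j, Q i j = 1 := fun i => by fin_cases i <;> simp [Q]
  have hr : Q 1 1 - Q 0 1 = 1 - p01 - p10 := by simp [Q]; ring
  have hπ0 a : π a ≠ 0 := (hπ a).ne'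
  have hmem (t : Fin n) : t.1 + 1 ∈ Icc 1 n := mem_Icc.2 ⟨le_add_self, t.2⟩
  have hD (t : Fin n) :
      (of Q ^ (t.1 + 1)) 1 1 - (of Q ^ (t.1 + 1)) 0 1 = (1 - p01 - p10) ^ (t.1 + 1) := by
    rw [pow_apply_one_one_sub_pow_apply_zero_one Q hQ, hr]
  refine ⟨fun t => by simpa [condProb_eq_pow_apply π Q hQ (hπ0 _)] using hD t, ?_⟩
  have hℓ0 (t : Fin n) (b : Fin 2) : ℓ (t.1 + 1) 0 b = ℓ (t.1 + 1) 0 0 := by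
    fin_cases b
    exacts [rfl, h0 _ (hmem t)]
  have hlog (a : Fin 2) := hasDerivAt_log_condExp'_exp_sum π Q hQ (hπ0 a) n ℓ
    (fun t b => hdiff _ (hmem t) b 0) hℓ0
  refine ((hlog 1).sub (hlog 0)).congr_deriv ?_
  rw [← sum_sub_distrib]
  refine sum_congr rfl fun t _ => ?_
  rw [sum_apply_one_mul_sub_sum_apply_zero_mul _ (sum_pow_apply_eq_one Q hQ _), hD,
    deriv_fun_sub ((hdiff _ (hmem t) 1) 0) ((hdiff _ (hmem t) 0) 0)]

/-- Let `σ = (σ₀,…,σ_n)` be a time-homogeneous binary Markov chain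
with one-step transition matrix `Q` having rows `(1−p₀₁, p₀₁)`, `(p₁₀, 1−p₁₀)`,
`p₀₁, p₁₀ ∈ (0,1)`, and set `r = 1 − p₀₁ − p₁₀`.  For `t = 1,…,n` let `ℓ t (ε, a)` be
differentiable in `ε` with `ℓ t (0,1) = ℓ t (0,0)`.  Then `D_{0t} = rᵗ` for
`1 ≤ t ≤ n`, and with
`λ_n(ε) = ln E[e^{S_n(ε)} | σ₀ = 1] − ln E[e^{S_n(ε)} | σ₀ = 0]` where
`S_n(ε) = ∑_{t=1}^n ℓ_t(ε, σ_t)`, the function `λ_n` is differentiable at `0` with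
`λ_n'(0) = ∑_{t=1}^n rᵗ d_t'(0)`. -/
theorem stmt19 (n : ℕ) (p01 p10 : ℝ)
    (h01 : p01 ∈ Set.Ioo (0 : ℝ) 1) (h10 : p10 ∈ Set.Ioo (0 : ℝ) 1)
    (π : Fin 2 → ℝ) (hπ : ∀ a, 0 < π a) (hπsum : π 0 + π 1 = 1)
    (ℓ : ℕ → ℝ → Fin 2 → ℝ)
    (hdiff : ∀ t ∈ Finset.Icc 1 n, ∀ a, Differentiable ℝ fun ε => ℓ t ε a)
    (h0 : ∀ t ∈ Finset.Icc 1 n, ℓ t 0 1 = ℓ t 0 0) :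
    (∀ t : Fin n,
      condProb n π (fun _ => ![![1 - p01, p01], ![p10, 1 - p10]]) 0 t.succ 1 1 -
          condProb n π (fun _ => ![![1 - p01, p01], ![p10, 1 - p10]]) 0 t.succ 0 1 =
        (1 - p01 - p10) ^ (t.1 + 1)) ∧
    HasDerivAt (fun ε =>
        Real.log (condExp' n π (fun _ => ![![1 - p01, p01], ![p10, 1 - p10]]) 0 1
          fun v => Real.exp (∑ t : Fin n, ℓ (t.1 + 1) ε (v t.succ))) -
        Real.log (condExp' n π (fun _ => ![![1 - p01, p01], ![p10, 1 - p10]]) 0 0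
          fun v => Real.exp (∑ t : Fin n, ℓ (t.1 + 1) ε (v t.succ))))
      (∑ t : Fin n, (1 - p01 - p10) ^ (t.1 + 1) *
        deriv (fun ε => ℓ (t.1 + 1) ε 1 - ℓ (t.1 + 1) ε 0) 0) 0 :=
  stmt19_general n p01 p10 π hπ ℓ hdiff h0
end
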